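/- Let f be a nonconstant map in C(Σ, M). Then there exists δ > 0 such that the saturation of the closed δ-ball around f, namely the set { h ∘ g_a : h ∈ C(Σ, M), d(h, f) ≤ δ, a ∈ ℂ, a ≠ 0 }, is a closed subset of the subspace of nonconstant maps in C(Σ, M). -/

import Mathlib

/-!
A map `k` lies in the saturation `S` of the closed `δ`-ball around `f` exactly when `k` is
`δ`-close to `f ∘ g_a` for some `a ≠ 0`. If `f₂` is a limit of such maps, with parameters `aₙ`,
let `p` be a cluster point of `(aₙ)` on the compact sphere. Evaluating at `z ≠ 0`, where
`g_{aₙ} z = g_z aₙ`, gives `d(f₂ z, f (g_z p)) ≤ δ` on a dense set. If `p = c ≠ 0` this says that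
`f₂` is `δ`-close to `f ∘ g_c`, so `f₂ ∈ S`. If `p ∈ {0, ∞}` then `g_z p = p`, so `f₂` is `δ`-close
to the constant `f p`. As `f₂` is also `δ`-close to some `h ∘ g_a ∈ S` and `g_a` is onto, `f p`
would then lie within `3δ` of every value of `f`, which is impossible when `6δ = d(f x, f y)`.
-/

open OnePoint

/-- The reparametrization `g_a : Σ → Σ` of the Riemann sphere `Σ = OnePoint ℂ`
extending `z ↦ a · z` on `ℂ` and fixing the point at infinity. -/
noncomputable def gA (a : ℂ) (ha : a ≠ 0) : C(OnePoint ℂ, OnePoint ℂ) where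
  toFun := OnePoint.map (fun z => a * z)
  continuous_toFun := (Homeomorph.onePointCongr (Homeomorph.mulLeft₀ a ha)).continuous

open Filter Topology

lemma gA_coe (a : ℂ) (ha : a ≠ 0) (z : ℂ) : gA a ha z = ↑(a * z) := rfl

lemma gA_coe_comm {a b : ℂ} (ha : a ≠ 0) (hb : b ≠ 0) : gA a ha b = gA b hb a := by
  rw [gA_coe, gA_coe, mul_comm]

lemma gA_gA_inv (a : ℂ) (ha : a ≠ 0) (w : OnePoint ℂ) :
    gA a ha (gA a⁻¹ (inv_ne_zero ha) w) = w := by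
  induction w using OnePoint.rec with
  | infty => rfl
  | coe z => rw [gA_coe, gA_coe, mul_inv_cancel_left₀ ha]

lemma gA_inv_gA (a : ℂ) (ha : a ≠ 0) (w : OnePoint ℂ) :
    gA a⁻¹ (inv_ne_zero ha) (gA a ha w) = w := by
  induction w using OnePoint.rec with
  | infty => rfl
  | coe z => rw [gA_coe, gA_coe, inv_mul_cancel_left₀ ha]

lemma ContinuousMap.dist_comp_le {X Y M : Type*} [TopologicalSpace X] [CompactSpace X]
    [TopologicalSpace Y] [CompactSpace Y] [PseudoMetricSpace M] (f h : C(Y, M)) (g : C(X, Y)) :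
    dist (f.comp g) (h.comp g) ≤ dist f h :=
  (ContinuousMap.dist_le dist_nonneg).2 fun x => ContinuousMap.dist_apply_le_dist (g x)

lemma MapClusterPt.le_of_le_add_of_tendsto_zero {α X : Type*} [TopologicalSpace X]
    {F : Filter α} {u : α → X} {p : X} (hp : MapClusterPt p F u) {ψ : X → ℝ}
    (hψ : Continuous ψ) {b : α → ℝ} (hb : Tendsto b F (𝓝 0)) {δ : ℝ}
    (h : ∀ i, ψ (u i) ≤ δ + b i) : ψ p ≤ δ :=
  le_of_forall_pos_le_add fun _ hε =>
    (isClosed_le hψ continuous_const).mem_of_mapClusterPt hp <|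
      (hb.eventually (gt_mem_nhds hε)).mono fun i hi => (h i).trans (by linarith)

lemma forall_dist_le_of_forall_ne_zero {M : Type*} [PseudoMetricSpace M]
    {g₁ g₂ : OnePoint ℂ → M} (hg₁ : Continuous g₁) (hg₂ : Continuous g₂) {δ : ℝ}
    (h : ∀ z : ℂ, z ≠ 0 → dist (g₁ z) (g₂ z) ≤ δ) (w : OnePoint ℂ) : dist (g₁ w) (g₂ w) ≤ δ := by
  have hdense : Dense (((↑) : ℂ → OnePoint ℂ) '' {0}ᶜ) :=
    denseRange_coe.dense_image continuous_coe (dense_compl_singleton 0)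
  refine hdense.induction ?_ (isClosed_le (hg₁.dist hg₂) continuous_const) w
  rintro _ ⟨z, hz, rfl⟩
  exact h z hz

section

variable {M : Type*} [MetricSpace M]

def saturatedBall (f : C(OnePoint ℂ, M)) (δ : ℝ) : Set C(OnePoint ℂ, M) :=
  {k | ∃ (h : C(OnePoint ℂ, M)) (a : ℂ) (ha : a ≠ 0), dist h f ≤ δ ∧ k = h.comp (gA a ha)}

lemma mem_saturatedBall_iff {f k : C(OnePoint ℂ, M)} {δ : ℝ} :
    k ∈ saturatedBall f δ ↔ ∃ (a : ℂ) (ha : a ≠ 0), dist k (f.comp (gA a ha)) ≤ δ := by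
  constructor
  · rintro ⟨h, a, ha, hh, rfl⟩
    exact ⟨a, ha, (h.dist_comp_le f _).trans hh⟩
  · rintro ⟨a, ha, hk⟩
    refine ⟨k.comp (gA a⁻¹ (inv_ne_zero ha)), a, ha, ?_, ?_⟩
    · have hf : (f.comp (gA a ha)).comp (gA a⁻¹ (inv_ne_zero ha)) = f := by
        ext w; simp only [ContinuousMap.comp_apply, gA_gA_inv]
      simpa only [hf] using (k.dist_comp_le (f.comp (gA a ha)) (gA a⁻¹ (inv_ne_zero ha))).trans hk
    · ext w; simp only [ContinuousMap.comp_apply, gA_inv_gA]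

lemma dist_apply_lt_of_mem_closure_saturatedBall {f f₂ : C(OnePoint ℂ, M)} {δ : ℝ}
    (hf₂ : f₂ ∈ closure (saturatedBall f δ)) (hδ : 0 < δ) {m : M}
    (hm : ∀ w, dist (f₂ w) m ≤ δ) (x : OnePoint ℂ) : dist (f x) m < 3 * δ := by
  obtain ⟨k, hk, hf₂k⟩ := Metric.mem_closure_iff.1 hf₂ δ hδ
  obtain ⟨a, ha, hka⟩ := mem_saturatedBall_iff.1 hk
  set x' := gA a⁻¹ (inv_ne_zero ha) x
  have hx' : gA a ha x' = x := gA_gA_inv a ha x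
  calc dist (f x) m ≤ dist (f x) (k x') + dist (k x') (f₂ x') + dist (f₂ x') m :=
        dist_triangle4 _ _ _ _
    _ < δ + δ + δ := by
        have hkf : dist (f x) (k x') ≤ δ := by
          rw [dist_comm, ← hx']
          exact (ContinuousMap.dist_apply_le_dist (g := f.comp (gA a ha)) x').trans hka
        have hkf₂ : dist (k x') (f₂ x') < δ := by
          rw [dist_comm]
          exact (ContinuousMap.dist_apply_le_dist x').trans_lt hf₂k
        linarith [hm x']
    _ = 3 * δ := by ring

lemma exists_dist_le_gA_of_mem_closure_saturatedBall {f f₂ : C(OnePoint ℂ, M)} {δ : ℝ}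
    (hf₂ : f₂ ∈ closure (saturatedBall f δ)) :
    ∃ p : OnePoint ℂ, ∀ (z : ℂ) (hz : z ≠ 0), dist (f₂ z) (f (gA z hz p)) ≤ δ := by
  have hseq : ∀ n : ℕ, ∃ (a : ℂ) (ha : a ≠ 0),
      ∀ w, dist (f₂ w) (f (gA a ha w)) ≤ δ + 1 / (n + 1) := by
    intro n
    obtain ⟨k, hk, hf₂k⟩ := Metric.mem_closure_iff.1 hf₂ _ Nat.one_div_pos_of_nat
    obtain ⟨a, ha, hka⟩ := mem_saturatedBall_iff.1 hk
    refine ⟨a, ha, fun w => ?_⟩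
    calc dist (f₂ w) (f (gA a ha w)) ≤ dist (f₂ w) (k w) + dist (k w) (f (gA a ha w)) :=
          dist_triangle _ _ _
      _ ≤ 1 / (n + 1) + δ := by
          gcongr
          · exact (ContinuousMap.dist_apply_le_dist w).trans hf₂k.le
          · exact (ContinuousMap.dist_apply_le_dist (g := f.comp (gA a ha)) w).trans hka
      _ = δ + 1 / (n + 1) := add_comm _ _
  choose a ha hd using hseq
  obtain ⟨p, hp⟩ := exists_clusterPt_of_compactSpace (map (fun n => (a n : OnePoint ℂ)) atTop)
  refine ⟨p, fun z hz => MapClusterPt.le_of_le_add_of_tendsto_zero hp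
    (ψ := fun q => dist (f₂ z) (f (gA z hz q))) (by fun_prop)
    tendsto_one_div_add_atTop_nhds_zero_nat fun n => ?_⟩
  simpa only [gA_coe_comm (ha n) hz] using hd n z

end

theorem saturated_ball_closed_in_nonconstant_general {M : Type*} [MetricSpace M]
    (f : C(OnePoint ℂ, M)) (hf : ∃ x y, f x ≠ f y) :
    ∃ δ > 0,
      ∀ f₂ : C(OnePoint ℂ, M), (∃ x y, f₂ x ≠ f₂ y) →
        f₂ ∈ closure {k : C(OnePoint ℂ, M) | ∃ (h : C(OnePoint ℂ, M)) (a : ℂ) (ha : a ≠ 0),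
          dist h f ≤ δ ∧ k = h.comp (gA a ha)} →
        f₂ ∈ {k : C(OnePoint ℂ, M) | ∃ (h : C(OnePoint ℂ, M)) (a : ℂ) (ha : a ≠ 0),
          dist h f ≤ δ ∧ k = h.comp (gA a ha)} := by
  obtain ⟨x, y, hxy⟩ := hf
  set δ := dist (f x) (f y) / 6 with hδf
  have hδ : 0 < δ := by have := dist_pos.2 hxy; positivity
  refine ⟨δ, hδ, fun f₂ _ hf₂ => ?_⟩
  change f₂ ∈ closure (saturatedBall f δ) at hf₂
  have not_near_const (m : M) (hm : ∀ z : ℂ, z ≠ 0 → dist (f₂ z) m ≤ δ) : False := by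
    have hm' := forall_dist_le_of_forall_ne_zero f₂.continuous continuous_const hm
    linarith [dist_triangle_right (f x) (f y) m,
      dist_apply_lt_of_mem_closure_saturatedBall hf₂ hδ hm' x,
      dist_apply_lt_of_mem_closure_saturatedBall hf₂ hδ hm' y]
  obtain ⟨p, hp⟩ := exists_dist_le_gA_of_mem_closure_saturatedBall hf₂
  induction p using OnePoint.rec with
  | infty => exact (not_near_const (f ∞) hp).elim
  | coe c =>
    by_cases hc : c = 0
    · subst hc
      exact (not_near_const (f ↑(0 : ℂ)) fun z hz => by
        simpa only [gA_coe, mul_zero] using hp z hz).elim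
    · refine mem_saturatedBall_iff.2 ⟨c, hc, (ContinuousMap.dist_le hδ.le).2 ?_⟩
      refine forall_dist_le_of_forall_ne_zero f₂.continuous (f.comp (gA c hc)).continuous
        fun z hz => ?_
      simpa only [ContinuousMap.comp_apply, gA_coe_comm hc hz] using hp z hz

/-- For a nonconstant continuous map `f : Σ → M`, there is a small closed ball around `f`
whose `ℂ*`-saturation is closed in the subspace of nonconstant maps: any nonconstant
uniform limit of points of the saturation belongs to the saturation. -/
theorem saturated_ball_closed_in_nonconstant {M : Type*} [MetricSpace M] [CompactSpace M]
    (f : C(OnePoint ℂ, M)) (hf : ∃ x y, f x ≠ f y) :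
    ∃ δ > 0,
      ∀ f₂ : C(OnePoint ℂ, M), (∃ x y, f₂ x ≠ f₂ y) →
        f₂ ∈ closure {k : C(OnePoint ℂ, M) | ∃ (h : C(OnePoint ℂ, M)) (a : ℂ) (ha : a ≠ 0),
          dist h f ≤ δ ∧ k = h.comp (gA a ha)} →
        f₂ ∈ {k : C(OnePoint ℂ, M) | ∃ (h : C(OnePoint ℂ, M)) (a : ℂ) (ha : a ≠ 0),
          dist h f ≤ δ ∧ k = h.comp (gA a ha)} :=
  saturated_ball_closed_in_nonconstant_general f hf
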